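/- Let V(ρ) = 72(36 − 14√6 + (√6 − 2)ρ²)/(36 − 14√6 + √6 ρ²)², Q(ρ) = (384√6 − ρ²(ρ² + 24√6 − 44) − 956)/(ρ² + 6√6 − 14)², and β(ρ) = 3/ρ − ρ/4 − 4ρ/(6√6 − 14 + ρ²). Define the first-order operators Bv(ρ) := −v'(ρ) + β(ρ)v(ρ) and B⁺v(ρ) := v'(ρ) + β(ρ)v(ρ). Then for every v ∈ C²((0,∞), ℂ) and all ρ > 0: (i) B⁺(Bv)(ρ) = −v''(ρ) + ( ρ²/16 + 6/ρ² + 1/4 − V(ρ) ) v(ρ); (ii) B(B⁺v)(ρ) = −v''(ρ) + ( ρ²/16 + 12/ρ² + 7/4 + Q(ρ) ) v(ρ); (iii) moreover, with a₁ = (1/2)√(3/2), a₂ = (1/2)(18 − 7√6) and 𝐠(ρ) = (a₁ρ² + a₂)^{−2}, the function ρ ↦ ρ³ e^{−ρ²/8} 𝐠(ρ) lies in the kernel of B. -/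

import Mathlib

open Set

noncomputable section

/-- The potential `V(ρ) = 72(36 − 14√6 + (√6 − 2)ρ²)/(36 − 14√6 + √6 ρ²)²`. -/
def Vpot (ρ : ℝ) : ℝ :=
  72 * (36 - 14 * Real.sqrt 6 + (Real.sqrt 6 - 2) * ρ^2) /
    (36 - 14 * Real.sqrt 6 + Real.sqrt 6 * ρ^2)^2

/-- `Q(ρ) = (384√6 − ρ²(ρ² + 24√6 − 44) − 956)/(ρ² + 6√6 − 14)²`. -/
def Qpot (ρ : ℝ) : ℝ :=
  (384 * Real.sqrt 6 - ρ^2 * (ρ^2 + 24 * Real.sqrt 6 - 44) - 956) /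
    (ρ^2 + 6 * Real.sqrt 6 - 14)^2

/-- `β(ρ) = 3/ρ − ρ/4 − 4ρ/(6√6 − 14 + ρ²)`. -/
def betaF (ρ : ℝ) : ℝ := 3/ρ - ρ/4 - 4*ρ/(6 * Real.sqrt 6 - 14 + ρ^2)

/-- `Bv = −v' + βv`. -/
def Bop (v : ℝ → ℂ) (ρ : ℝ) : ℂ := -deriv v ρ + (betaF ρ : ℂ) * v ρ

/-- `B⁺v = v' + βv`. -/
def Bplus (v : ℝ → ℂ) (ρ : ℝ) : ℂ := deriv v ρ + (betaF ρ : ℂ) * v ρ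

/-- `a₁ = (1/2)√(3/2)`. -/
def a1 : ℝ := (1/2) * Real.sqrt (3/2)

/-- `a₂ = (1/2)(18 − 7√6)`. -/
def a2 : ℝ := (1/2) * (18 - 7 * Real.sqrt 6)

/-- The explicit derivative of `betaF`. -/
def betaF' (ρ : ℝ) : ℝ :=
  -3/ρ^2 - 1/4 - (4*(6 * Real.sqrt 6 - 14) - 4*ρ^2)/(6 * Real.sqrt 6 - 14 + ρ^2)^2

lemma h14 : (14:ℝ) < 6 * Real.sqrt 6 := by
  nlinarith [Real.sq_sqrt (by norm_num : (0:ℝ) ≤ 6), Real.sqrt_nonneg 6]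

lemma hden (ρ : ℝ) : (0:ℝ) < 6 * Real.sqrt 6 - 14 + ρ^2 := by
  nlinarith [h14, sq_nonneg ρ]

lemma hasDerivAt_betaF {ρ : ℝ} (hρ : 0 < ρ) : HasDerivAt betaF (betaF' ρ) ρ := by
  have h1 : HasDerivAt (fun s : ℝ => 3/s) ((0 * ρ - 3 * 1)/ρ^2) ρ :=
    (hasDerivAt_const ρ (3:ℝ)).div (hasDerivAt_id ρ) (ne_of_gt hρ)
  have h2 : HasDerivAt (fun s : ℝ => s/4) (1/4 : ℝ) ρ := by
    simpa using (hasDerivAt_id ρ).div_const 4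
  have hd : HasDerivAt (fun s : ℝ => 6 * Real.sqrt 6 - 14 + s^2) (2*ρ) ρ := by
    simpa using (hasDerivAt_pow 2 ρ).const_add (6 * Real.sqrt 6 - 14)
  have hn : HasDerivAt (fun s : ℝ => 4*s) (4:ℝ) ρ := by
    simpa using (hasDerivAt_id ρ).const_mul (4:ℝ)
  have h3 : HasDerivAt (fun s : ℝ => 4*s/(6 * Real.sqrt 6 - 14 + s^2))
      ((4 * (6 * Real.sqrt 6 - 14 + ρ^2) - 4*ρ*(2*ρ))/(6 * Real.sqrt 6 - 14 + ρ^2)^2) ρ :=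
    hn.div hd (ne_of_gt (hden ρ))
  have := (h1.sub h2).sub h3
  refine this.congr_deriv ?_
  unfold betaF'
  have := hden ρ
  field_simp
  ring

lemma key1 {ρ : ℝ} (hρ : 0 < ρ) :
    betaF' ρ + betaF ρ^2 = ρ^2/16 + 6/ρ^2 + 1/4 - Vpot ρ := by
  set s := Real.sqrt 6 with hsdef
  have hs2 : s ^ 2 = 6 := Real.sq_sqrt (by norm_num)
  have hs3 : s ^ 3 = 6 * s := by rw [pow_succ, hs2]
  have hs4 : s ^ 4 = 36 := by rw [pow_succ, hs3]; nlinarith [hs2]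
  have hs5 : s ^ 5 = 36 * s := by rw [pow_succ, hs4]
  have hs6 : s ^ 6 = 216 := by rw [pow_succ, hs5]; nlinarith [hs2]
  have hs7 : s ^ 7 = 216 * s := by rw [pow_succ, hs6]
  have hs8 : s ^ 8 = 1296 := by rw [pow_succ, hs7]; nlinarith [hs2]
  have hs0 : (0:ℝ) < s := Real.sqrt_pos.mpr (by norm_num)
  have hd := hden ρ
  rw [← hsdef] at hd
  have hV : 36 - 14 * s + s * ρ^2 = s * (6 * s - 14 + ρ^2) := by nlinarith [hs2]
  unfold betaF betaF' Vpot
  rw [← hsdef, hV]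
  have h1 : ρ ≠ 0 := ne_of_gt hρ
  have h2 : 6 * s - 14 + ρ^2 ≠ 0 := ne_of_gt hd
  have h3 : s ≠ 0 := ne_of_gt hs0
  field_simp
  ring_nf
  simp only [hs2, hs3, hs4, hs5, hs6, hs7, hs8]
  ring

lemma key2 {ρ : ℝ} (hρ : 0 < ρ) :
    betaF ρ^2 - betaF' ρ = ρ^2/16 + 12/ρ^2 + 7/4 + Qpot ρ := by
  set s := Real.sqrt 6 with hsdef
  have hs2 : s ^ 2 = 6 := Real.sq_sqrt (by norm_num)
  have hs3 : s ^ 3 = 6 * s := by rw [pow_succ, hs2]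
  have hs4 : s ^ 4 = 36 := by rw [pow_succ, hs3]; nlinarith [hs2]
  have hs5 : s ^ 5 = 36 * s := by rw [pow_succ, hs4]
  have hs6 : s ^ 6 = 216 := by rw [pow_succ, hs5]; nlinarith [hs2]
  have hd := hden ρ
  rw [← hsdef] at hd
  have hQ : ρ^2 + 6 * s - 14 = 6 * s - 14 + ρ^2 := by ring
  unfold betaF betaF' Qpot
  rw [← hsdef, hQ]
  have h1 : ρ ≠ 0 := ne_of_gt hρ
  have h2 : 6 * s - 14 + ρ^2 ≠ 0 := ne_of_gt hd
  field_simp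
  ring_nf
  simp only [hs2, hs3, hs4, hs5, hs6]
  ring

lemma ha1 : a1 = Real.sqrt 6 / 4 := by
  unfold a1
  have h4 : Real.sqrt 4 = 2 := by
    rw [show (4:ℝ) = 2^2 by norm_num, Real.sqrt_sq (by norm_num : (0:ℝ) ≤ 2)]
  have : Real.sqrt (3/2) * Real.sqrt 4 = Real.sqrt 6 := by
    rw [← Real.sqrt_mul (by norm_num)]; norm_num
  rw [h4] at this
  linarith

lemma hD (ρ : ℝ) : a1 * ρ^2 + a2 = Real.sqrt 6 / 4 * (6 * Real.sqrt 6 - 14 + ρ^2) := by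
  rw [ha1]; unfold a2
  have hs : Real.sqrt 6 ^ 2 = 6 := Real.sq_sqrt (by norm_num)
  nlinarith [hs]

lemma hDpos (ρ : ℝ) : 0 < a1 * ρ^2 + a2 := by
  rw [hD]
  exact mul_pos (by positivity) (hden ρ)

/-- The supersymmetric factorization: (i) `B⁺B v = −v'' + (ρ²/16 + 6/ρ² + 1/4 − V)v`,
(ii) `BB⁺ v = −v'' + (ρ²/16 + 12/ρ² + 7/4 + Q)v` for `v ∈ C²((0,∞),ℂ)`, and
(iii) `ρ ↦ ρ³e^{−ρ²/8}𝐠(ρ)` with `𝐠(ρ) = (a₁ρ²+a₂)^{−2}` lies in the kernel of `B`. -/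
theorem stmt13 :
    (∀ v : ℝ → ℂ, ContDiffOn ℝ 2 v (Ioi 0) → ∀ ρ : ℝ, 0 < ρ →
      Bplus (Bop v) ρ =
        -deriv (deriv v) ρ + ((ρ^2/16 + 6/ρ^2 + 1/4 - Vpot ρ : ℝ) : ℂ) * v ρ) ∧
    (∀ v : ℝ → ℂ, ContDiffOn ℝ 2 v (Ioi 0) → ∀ ρ : ℝ, 0 < ρ →
      Bop (Bplus v) ρ =
        -deriv (deriv v) ρ + ((ρ^2/16 + 12/ρ^2 + 7/4 + Qpot ρ : ℝ) : ℂ) * v ρ) ∧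
    (∀ ρ : ℝ, 0 < ρ →
      Bop (fun s : ℝ => ((s^3 * Real.exp (-s^2/8) * (a1 * s^2 + a2)^(-2 : ℤ) : ℝ) : ℂ)) ρ
        = 0) := by
  refine ⟨?_, ?_, ?_⟩
  · intro v hv ρ hρ
    have hmem : Ioi (0:ℝ) ∈ nhds ρ := isOpen_Ioi.mem_nhds hρ
    have hder : ContDiffOn ℝ 1 (deriv v) (Ioi 0) :=
      hv.deriv_of_isOpen isOpen_Ioi (by norm_num)
    have hv1 : HasDerivAt v (deriv v ρ) ρ :=
      ((hv.contDiffAt hmem).differentiableAt two_ne_zero).hasDerivAt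
    have hv2 : HasDerivAt (deriv v) (deriv (deriv v) ρ) ρ :=
      ((hder.contDiffAt hmem).differentiableAt one_ne_zero).hasDerivAt
    have hβ : HasDerivAt (fun s : ℝ => ((betaF s : ℝ) : ℂ)) ((betaF' ρ : ℝ) : ℂ) ρ :=
      (hasDerivAt_betaF hρ).ofReal_comp
    have hB : HasDerivAt (Bop v)
        (-(deriv (deriv v) ρ) + (((betaF' ρ : ℝ) : ℂ) * v ρ + ((betaF ρ : ℝ) : ℂ) * deriv v ρ)) ρ :=
      hv2.neg.add (hβ.mul hv1)
    show deriv (Bop v) ρ + (betaF ρ : ℂ) * Bop v ρ = _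
    rw [hB.deriv, ← key1 hρ]
    show _ = -deriv (deriv v) ρ + ((betaF' ρ + betaF ρ^2 : ℝ) : ℂ) * v ρ
    unfold Bop
    push_cast
    ring
  · intro v hv ρ hρ
    have hmem : Ioi (0:ℝ) ∈ nhds ρ := isOpen_Ioi.mem_nhds hρ
    have hder : ContDiffOn ℝ 1 (deriv v) (Ioi 0) :=
      hv.deriv_of_isOpen isOpen_Ioi (by norm_num)
    have hv1 : HasDerivAt v (deriv v ρ) ρ :=
      ((hv.contDiffAt hmem).differentiableAt two_ne_zero).hasDerivAt
    have hv2 : HasDerivAt (deriv v) (deriv (deriv v) ρ) ρ :=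
      ((hder.contDiffAt hmem).differentiableAt one_ne_zero).hasDerivAt
    have hβ : HasDerivAt (fun s : ℝ => ((betaF s : ℝ) : ℂ)) ((betaF' ρ : ℝ) : ℂ) ρ :=
      (hasDerivAt_betaF hρ).ofReal_comp
    have hB : HasDerivAt (Bplus v)
        (deriv (deriv v) ρ + (((betaF' ρ : ℝ) : ℂ) * v ρ + ((betaF ρ : ℝ) : ℂ) * deriv v ρ)) ρ :=
      hv2.add (hβ.mul hv1)
    show -deriv (Bplus v) ρ + (betaF ρ : ℂ) * Bplus v ρ = _
    rw [hB.deriv, ← key2 hρ]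
    show _ = -deriv (deriv v) ρ + ((betaF ρ^2 - betaF' ρ : ℝ) : ℂ) * v ρ
    unfold Bplus
    push_cast
    ring
  · intro ρ hρ
    set u : ℝ → ℝ := fun s => s^3 * Real.exp (-s^2/8) * ((a1 * s^2 + a2)^2)⁻¹ with hu
    have hfun : (fun s : ℝ => (s^3 * Real.exp (-s^2/8) * (a1 * s^2 + a2)^(-2 : ℤ) : ℝ)) = u := by
      funext s; rw [hu, zpow_neg]
      norm_cast
    have h1 : HasDerivAt (fun s : ℝ => s^3) (3 * ρ^2) ρ := by
      simpa using hasDerivAt_pow 3 ρ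
    have h2 : HasDerivAt (fun s : ℝ => Real.exp (-s^2/8)) (Real.exp (-ρ^2/8) * (-(2*ρ)/8)) ρ := by
      have hin : HasDerivAt (fun s : ℝ => -s^2/8) (-(2*ρ)/8) ρ := by
        simpa using ((hasDerivAt_pow 2 ρ).neg.div_const 8)
      exact hin.exp
    have hDd : HasDerivAt (fun s : ℝ => a1 * s^2 + a2) (a1 * (2*ρ)) ρ := by
      simpa using ((hasDerivAt_pow 2 ρ).const_mul a1).add_const a2
    have hD2 : HasDerivAt (fun s : ℝ => (a1 * s^2 + a2)^2)
        (2 * (a1 * ρ^2 + a2) ^ 1 * (a1 * (2*ρ))) ρ := hDd.pow 2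
    have h3 : HasDerivAt (fun s : ℝ => ((a1 * s^2 + a2)^2)⁻¹)
        (-(2 * (a1 * ρ^2 + a2) ^ 1 * (a1 * (2*ρ))) / ((a1 * ρ^2 + a2)^2)^2) ρ :=
      hD2.inv (pow_ne_zero 2 (ne_of_gt (hDpos ρ)))
    have hu' : HasDerivAt u
        ((3 * ρ^2 * Real.exp (-ρ^2/8) + ρ^3 * (Real.exp (-ρ^2/8) * (-(2*ρ)/8))) * ((a1 * ρ^2 + a2)^2)⁻¹
          + ρ^3 * Real.exp (-ρ^2/8) * (-(2 * (a1 * ρ^2 + a2) ^ 1 * (a1 * (2*ρ))) / ((a1 * ρ^2 + a2)^2)^2)) ρ :=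
      (h1.mul h2).mul h3
    have hc : HasDerivAt (fun s : ℝ => ((u s : ℝ) : ℂ)) ((_ : ℝ) : ℂ) ρ := hu'.ofReal_comp
    have hbeta : betaF ρ = 3/ρ - ρ/4 - 4*a1*ρ/(a1*ρ^2+a2) := by
      unfold betaF
      rw [hD ρ, ha1]
      have hs0 : Real.sqrt 6 ≠ 0 := ne_of_gt (Real.sqrt_pos.mpr (by norm_num))
      have hd0 : 6 * Real.sqrt 6 - 14 + ρ^2 ≠ 0 := ne_of_gt (hden ρ)
      have hρ0 : ρ ≠ 0 := ne_of_gt hρ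
      field_simp
    have key : betaF ρ * u ρ =
        (3 * ρ^2 * Real.exp (-ρ^2/8) + ρ^3 * (Real.exp (-ρ^2/8) * (-(2*ρ)/8))) * ((a1 * ρ^2 + a2)^2)⁻¹
          + ρ^3 * Real.exp (-ρ^2/8) * (-(2 * (a1 * ρ^2 + a2) ^ 1 * (a1 * (2*ρ))) / ((a1 * ρ^2 + a2)^2)^2) := by
      rw [hu, hbeta]
      have hρ0 : ρ ≠ 0 := ne_of_gt hρ
      have hd0 : a1 * ρ^2 + a2 ≠ 0 := ne_of_gt (hDpos ρ)
      have hd1 : ρ^2 * a1 + a2 ≠ 0 := by rw [mul_comm]; exact hd0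
      field_simp
      ring
    have hfunC : (fun s : ℝ => ((s^3 * Real.exp (-s^2/8) * (a1 * s^2 + a2)^(-2 : ℤ) : ℝ) : ℂ))
        = fun s => ((u s : ℝ) : ℂ) := by
      funext s; rw [congrFun hfun s]
    unfold Bop
    rw [hfunC, hc.deriv]
    rw [← Complex.ofReal_mul, key]
    push_cast
    ring

end
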